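/- arXiv:1005.3470 — 2 statements merged into one kernel-verified Lean document; each statement's English description precedes it below -/
import Mathlib

section
/- (Pointwise monotonicity of infection probability.) Under the hypotheses of the main monotonicity theorem (σ₊ ≥ σ, γ₋ ≤ γ, τ₊ ≥ τ pointwise), for every node u the probability that u is ultimately infected under the epidemic (σ₊, γ₋, τ₊) is at least its probability of ultimate infection under (σ, γ, τ). -/
open Finset

/-- A full assignment of random coins for the epidemic: initial-infection coins,
removal coins, and per-(ordered-)edge transmission coins. -/
abbrev Coins (V : Type*) := (V → Bool) × (V → Bool) × (V → V → Bool)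

variable {V : Type*} [Fintype V] [DecidableEq V]

/-- Probability weight of a coin outcome `ω` under induction probabilities `σ`,
removal probabilities `γ` and transmission probabilities `τ`. -/
def coinWeight (σ γ : V → ℝ) (τ : V → V → ℝ) (ω : Coins V) : ℝ :=
  (∏ v, if ω.1 v then σ v else 1 - σ v) *
  (∏ v, if ω.2.1 v then γ v else 1 - γ v) *
  ∏ u, ∏ v, if ω.2.2 u v then τ u v else 1 - τ u v

/-- One step of the discrete-time SIR process: state is `(I, R)`.
An infected node, unless removed (removal coin `true`), transmits to each
susceptible out-neighbour whose transmission coin is `true`; then it recovers. -/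
def sirStep (A : V → V → Bool) (ω : Coins V) (p : Finset V × Finset V) :
    Finset V × Finset V :=
  (univ.filter (fun v => v ∉ p.1 ∧ v ∉ p.2 ∧
      ∃ u ∈ p.1, ω.2.1 u = false ∧ A u v = true ∧ ω.2.2 u v = true),
   p.2 ∪ p.1)

/-- The discrete-time SIR process `(I_t, R_t)`; susceptibles are the complement. -/
def sirProc (A : V → V → Bool) (ω : Coins V) : ℕ → Finset V × Finset V
  | 0 => (univ.filter (fun v => ω.1 v = true), ∅)
  | t + 1 => sirStep A ω (sirProc A ω t)

/-- The set of ever-infected nodes (the epidemic is stationary by time `n = |V|`). -/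
def everInf (A : V → V → Bool) (ω : Coins V) : Finset V :=
  (sirProc A ω (Fintype.card V)).1 ∪ (sirProc A ω (Fintype.card V)).2

/-- The mean final extent `E(|R_n|)` of the SIR epidemic. -/
def meanExtent (A : V → V → Bool) (σ γ : V → ℝ) (τ : V → V → ℝ) : ℝ :=
  ∑ ω : Coins V, coinWeight σ γ τ ω * ((everInf A ω).card : ℝ)

/-- The probability that node `u` is ultimately infected. -/
def probInf (A : V → V → Bool) (σ γ : V → ℝ) (τ : V → V → ℝ) (u : V) : ℝ :=
  ∑ ω : Coins V, coinWeight σ γ τ ω * (if u ∈ everInf A ω then 1 else 0)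

/-! Couple the two epidemics on a common probability space: coin by coin, a Bernoulli(`p`) and a
Bernoulli(`q`) coin with `p ≤ q` can be realised jointly so that the first never exceeds the second.
Under this coupling the second epidemic starts with more infected nodes, removes fewer of them and
has more open edges, and the SIR dynamics is monotone in the coins: by induction on time, every node
ever infected in the first epidemic is ever infected in the second. Hence the expectation of any
observable that is monotone in the coins, in particular of the indicator that `u` is ultimately
infected, can only increase. -/

section EverInfected

variable (A : V → V → Bool) (ω : Coins V)

def everInfAt (t : ℕ) : Finset V := (sirProc A ω t).1 ∪ (sirProc A ω t).2

lemma everInfAt_zero : everInfAt A ω 0 = (sirProc A ω 0).1 := by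
  simp [everInfAt, sirProc]

lemma everInfAt_succ (t : ℕ) :
    everInfAt A ω (t + 1) = (sirProc A ω (t + 1)).1 ∪ everInfAt A ω t := by
  simp only [everInfAt, sirProc, sirStep, union_comm (sirProc A ω t).2]

lemma everInfAt_mono : Monotone (everInfAt A ω) :=
  monotone_nat_of_le_succ fun t => (everInfAt_succ A ω t).symm ▸ subset_union_right

lemma exists_le_mem_infected_of_mem_everInfAt {v : V} {t : ℕ} (hv : v ∈ everInfAt A ω t) :
    ∃ s ≤ t, v ∈ (sirProc A ω s).1 := by
  induction t with
  | zero => exact ⟨0, le_rfl, everInfAt_zero A ω ▸ hv⟩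
  | succ t ih =>
    rw [everInfAt_succ, mem_union] at hv
    rcases hv with hI | hv
    · exact ⟨t + 1, le_rfl, hI⟩
    · obtain ⟨s, hs, hI⟩ := ih hv
      exact ⟨s, hs.trans t.le_succ, hI⟩

lemma mem_everInfAt_succ_of_transmit {u v : V} {t : ℕ} (hu : u ∈ everInfAt A ω t)
    (hr : ω.2.1 u = false) (hA : A u v = true) (hτ : ω.2.2 u v = true) :
    v ∈ everInfAt A ω (t + 1) := by
  obtain ⟨s, hs, hI⟩ := exists_le_mem_infected_of_mem_everInfAt A ω hu
  refine everInfAt_mono A ω (Nat.succ_le_succ hs) ?_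
  by_cases hv : v ∈ everInfAt A ω s
  · exact everInfAt_mono A ω s.le_succ hv
  · rw [everInfAt, mem_union, not_or] at hv
    rw [everInfAt_succ]
    refine mem_union_left _ ?_
    simp only [sirProc, sirStep, mem_filter, mem_univ, true_and]
    exact ⟨hv.1, hv.2, u, hI, hr, hA, hτ⟩

end EverInfected

/-- `ω'` favours the epidemic at least as much as `ω`; the removal coins `ω.2.1` are compared the
other way round. -/
def CoinsLE {V : Type*} (ω ω' : Coins V) : Prop :=
  ω.1 ≤ ω'.1 ∧ ω'.2.1 ≤ ω.2.1 ∧ ω.2.2 ≤ ω'.2.2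

lemma everInfAt_subset_of_coinsLE (A : V → V → Bool) {ω ω' : Coins V} (h : CoinsLE ω ω')
    (t : ℕ) : everInfAt A ω t ⊆ everInfAt A ω' t := by
  obtain ⟨hinit, hrem, htr⟩ := h
  induction t with
  | zero =>
    intro v hv
    simp only [everInfAt_zero, sirProc, mem_filter, mem_univ, true_and] at hv ⊢
    exact Bool.le_iff_imp.1 (hinit v) hv
  | succ t ih =>
    intro v hv
    rw [everInfAt_succ, mem_union] at hv
    rcases hv with hI | hv
    · simp only [sirProc, sirStep, mem_filter, mem_univ, true_and] at hI
      obtain ⟨-, -, w, hw, hr, hA, hτ⟩ := hI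
      exact mem_everInfAt_succ_of_transmit A ω' (ih (mem_union_left _ hw))
        (Bool.eq_false_of_le_false (hr ▸ hrem w)) hA (Bool.le_iff_imp.1 (htr w v) hτ)
    · exact everInfAt_mono A ω' t.le_succ (ih hv)

lemma everInf_subset_of_coinsLE (A : V → V → Bool) {ω ω' : Coins V} (h : CoinsLE ω ω') :
    everInf A ω ⊆ everInf A ω' :=
  everInfAt_subset_of_coinsLE A h (Fintype.card V)

/-- The monotone coupling of a Bernoulli(`p`) and a Bernoulli(`q`) coin when `p ≤ q`: its
marginals are the two laws and it is supported on `a ≤ b`. -/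
def boolCoupling (p q : ℝ) : Bool → Bool → ℝ
  | false, false => 1 - q
  | false, true => q - p
  | true, false => 0
  | true, true => p

lemma boolCoupling_nonneg {p q : ℝ} (hp : 0 ≤ p) (hpq : p ≤ q) (hq : q ≤ 1) (a b : Bool) :
    0 ≤ boolCoupling p q a b := by
  cases a <;> cases b <;> simp only [boolCoupling] <;> linarith

lemma le_of_boolCoupling_ne_zero {p q : ℝ} {a b : Bool} (h : boolCoupling p q a b ≠ 0) :
    a ≤ b := by
  cases a <;> cases b <;> simp_all [boolCoupling]

lemma boolCoupling_add_right (p q : ℝ) (a : Bool) :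
    boolCoupling p q a true + boolCoupling p q a false = if a then p else 1 - p := by
  cases a <;> simp [boolCoupling]

lemma boolCoupling_add_left (p q : ℝ) (b : Bool) :
    boolCoupling p q true b + boolCoupling p q false b = if b then q else 1 - q := by
  cases b <;> simp [boolCoupling]

section
variable {ι κ : Type*} [Fintype ι] [DecidableEq ι] [Fintype κ] [DecidableEq κ]

lemma sum_prod_boolCoupling_right (p q : ι → ℝ) (x : ι → Bool) :
    ∑ y : ι → Bool, ∏ i, boolCoupling (p i) (q i) (x i) (y i) =
      ∏ i, if x i then p i else 1 - p i := by
  rw [← Fintype.prod_sum]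
  simp only [Fintype.sum_bool, boolCoupling_add_right]

lemma sum_prod_boolCoupling_left (p q : ι → ℝ) (y : ι → Bool) :
    ∑ x : ι → Bool, ∏ i, boolCoupling (p i) (q i) (x i) (y i) =
      ∏ i, if y i then q i else 1 - q i := by
  rw [← Fintype.prod_sum fun i b => boolCoupling (p i) (q i) b (y i)]
  simp only [Fintype.sum_bool, boolCoupling_add_left]

lemma sum_prod_prod_boolCoupling_right (p q : ι → κ → ℝ) (x : ι → κ → Bool) :
    ∑ y : ι → κ → Bool, ∏ i, ∏ j, boolCoupling (p i j) (q i j) (x i j) (y i j) =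
      ∏ i, ∏ j, if x i j then p i j else 1 - p i j := by
  rw [← Fintype.prod_sum fun i (z : κ → Bool) =>
    ∏ j, boolCoupling (p i j) (q i j) (x i j) (z j)]
  simp only [sum_prod_boolCoupling_right]

lemma sum_prod_prod_boolCoupling_left (p q : ι → κ → ℝ) (y : ι → κ → Bool) :
    ∑ x : ι → κ → Bool, ∏ i, ∏ j, boolCoupling (p i j) (q i j) (x i j) (y i j) =
      ∏ i, ∏ j, if y i j then q i j else 1 - q i j := by
  rw [← Fintype.prod_sum fun i (z : κ → Bool) =>
    ∏ j, boolCoupling (p i j) (q i j) (z j) (y i j)]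
  simp only [sum_prod_boolCoupling_left]

end

def coinCoupling (σ σp γm γ : V → ℝ) (τ τp : V → V → ℝ) (ω ω' : Coins V) : ℝ :=
  (∏ v, boolCoupling (σ v) (σp v) (ω.1 v) (ω'.1 v)) *
  (∏ v, boolCoupling (γm v) (γ v) (ω'.2.1 v) (ω.2.1 v)) *
  ∏ u, ∏ v, boolCoupling (τ u v) (τp u v) (ω.2.2 u v) (ω'.2.2 u v)

lemma sum_coinCoupling_right (σ σp γm γ : V → ℝ) (τ τp : V → V → ℝ) (ω : Coins V) :
    ∑ ω', coinCoupling σ σp γm γ τ τp ω ω' = coinWeight σ γ τ ω := by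
  simp only [coinCoupling, Fintype.sum_prod_type, ← mul_sum, ← sum_mul]
  rw [sum_prod_boolCoupling_right, sum_prod_boolCoupling_left, sum_prod_prod_boolCoupling_right,
    coinWeight]

lemma sum_coinCoupling_left (σ σp γm γ : V → ℝ) (τ τp : V → V → ℝ) (ω' : Coins V) :
    ∑ ω, coinCoupling σ σp γm γ τ τp ω ω' = coinWeight σp γm τp ω' := by
  simp only [coinCoupling, Fintype.sum_prod_type, ← mul_sum, ← sum_mul]
  rw [sum_prod_boolCoupling_left, sum_prod_boolCoupling_right, sum_prod_prod_boolCoupling_left,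
    coinWeight]

lemma coinCoupling_nonneg {V : Type*} [Fintype V] {σ σp γm γ : V → ℝ} {τ τp : V → V → ℝ}
    (hσ : ∀ v, 0 ≤ σ v ∧ σ v ≤ σp v ∧ σp v ≤ 1)
    (hγ : ∀ v, 0 ≤ γm v ∧ γm v ≤ γ v ∧ γ v ≤ 1)
    (hτ : ∀ u v, 0 ≤ τ u v ∧ τ u v ≤ τp u v ∧ τp u v ≤ 1) (ω ω' : Coins V) :
    0 ≤ coinCoupling σ σp γm γ τ τp ω ω' :=
  mul_nonneg (mul_nonneg
    (prod_nonneg fun v _ => boolCoupling_nonneg (hσ v).1 (hσ v).2.1 (hσ v).2.2 _ _)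
    (prod_nonneg fun v _ => boolCoupling_nonneg (hγ v).1 (hγ v).2.1 (hγ v).2.2 _ _))
    (prod_nonneg fun u _ => prod_nonneg fun v _ =>
      boolCoupling_nonneg (hτ u v).1 (hτ u v).2.1 (hτ u v).2.2 _ _)

lemma coinsLE_of_coinCoupling_ne_zero {V : Type*} [Fintype V] {σ σp γm γ : V → ℝ}
    {τ τp : V → V → ℝ} {ω ω' : Coins V} (h : coinCoupling σ σp γm γ τ τp ω ω' ≠ 0) :
    CoinsLE ω ω' := by
  simp only [coinCoupling, mul_ne_zero_iff, prod_ne_zero_iff, mem_univ, forall_const] at h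
  obtain ⟨⟨hinit, hrem⟩, htr⟩ := h
  exact ⟨fun v => le_of_boolCoupling_ne_zero (hinit v),
    fun v => le_of_boolCoupling_ne_zero (hrem v),
    fun u v => le_of_boolCoupling_ne_zero (htr u v)⟩

theorem sum_coinWeight_mul_le_of_monotone {σ σp γm γ : V → ℝ} {τ τp : V → V → ℝ}
    (hσ : ∀ v, 0 ≤ σ v ∧ σ v ≤ σp v ∧ σp v ≤ 1)
    (hγ : ∀ v, 0 ≤ γm v ∧ γm v ≤ γ v ∧ γ v ≤ 1)
    (hτ : ∀ u v, 0 ≤ τ u v ∧ τ u v ≤ τp u v ∧ τp u v ≤ 1) {f : Coins V → ℝ}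
    (hf : ∀ ω ω', CoinsLE ω ω' → f ω ≤ f ω') :
    ∑ ω, coinWeight σ γ τ ω * f ω ≤ ∑ ω, coinWeight σp γm τp ω * f ω := by
  set J := coinCoupling σ σp γm γ τ τp
  have hJ (ω ω' : Coins V) : J ω ω' * f ω ≤ J ω ω' * f ω' := by
    by_cases h0 : J ω ω' = 0
    · simp [h0]
    · exact mul_le_mul_of_nonneg_left (hf _ _ (coinsLE_of_coinCoupling_ne_zero h0))
        (coinCoupling_nonneg hσ hγ hτ ω ω')
  calc ∑ ω, coinWeight σ γ τ ω * f ω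
      = ∑ ω, ∑ ω', J ω ω' * f ω := by simp only [J, ← sum_mul, sum_coinCoupling_right]
    _ ≤ ∑ ω, ∑ ω', J ω ω' * f ω' := sum_le_sum fun ω _ => sum_le_sum fun ω' _ => hJ ω ω'
    _ = ∑ ω', coinWeight σp γm τp ω' * f ω' := by
      rw [sum_comm]; simp only [J, ← sum_mul, sum_coinCoupling_left]

/-- **pointwise monotonicity of infection probability.** Under the
hypotheses of the main monotonicity theorem (`σ₊ ≥ σ`, `γ₋ ≤ γ`, `τ₊ ≥ τ`
pointwise), every node `u` is at least as likely to be ultimately infected under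
`(σ₊, γ₋, τ₊)` as under `(σ, γ, τ)`. -/
theorem sir_prob_infection_monotone {V : Type*} [Fintype V] [DecidableEq V]
    (A : V → V → Bool) (σ σp γm γ : V → ℝ) (τ τp : V → V → ℝ)
    (hσ : ∀ v, 0 ≤ σ v ∧ σ v ≤ σp v ∧ σp v ≤ 1)
    (hγ : ∀ v, 0 ≤ γm v ∧ γm v ≤ γ v ∧ γ v ≤ 1)
    (hτ : ∀ u v, 0 ≤ τ u v ∧ τ u v ≤ τp u v ∧ τp u v ≤ 1) (u : V) :
    probInf A σp γm τp u ≥ probInf A σ γ τ u := by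
  refine sum_coinWeight_mul_le_of_monotone hσ hγ hτ fun ω ω' h => ?_
  by_cases hu : u ∈ everInf A ω
  · simp [hu, everInf_subset_of_coinsLE A h hu]
  · rw [if_neg hu]
    split_ifs <;> norm_num
end

section
/- (No outbreak transition for 2FleeSIR on the complete graph.) Consider the 2FleeSIR epidemic on the complete graph on n nodes with a single initially infected node, removal probability 0, and uniform transmission probability τ. Then the mean final extent equals exactly 1 + τ(n − 1): each of the n − 1 other nodes is infected in the first round independently with probability τ, and all nodes that remain susceptible after the first round observe at least two infected neighbors whenever ≥ 2 nodes are infected (and, in any case, no further infections occur), so the epidemic spreads no further. Thus the mean extent is linear in τ and n, with no discontinuous jump at τ = 1/n. -/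
open Finset

variable {V : Type*} [Fintype V] [DecidableEq V]

/-- One step of 2FleeSIR in which a susceptible node observes a neighbour as
infected when that neighbour is visibly affected, i.e. currently infected or
already removed (ever-infected): with at least `2` such neighbours it severs all
its ties before the transmission round. -/
def flee2Step (A : V → V → Bool) (ω : Coins V) (p : Finset V × Finset V × Finset V) :
    Finset V × Finset V × Finset V :=
  let Sev : Finset V := p.2.2 ∪ Finset.univ.filter (fun v => v ∉ p.1 ∧ v ∉ p.2.1 ∧
      2 ≤ (Finset.univ.filter (fun u => A u v = true ∧ (u ∈ p.1 ∨ u ∈ p.2.1))).card)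
  (Finset.univ.filter (fun v => v ∉ p.1 ∧ v ∉ p.2.1 ∧ v ∉ Sev ∧
      ∃ u ∈ p.1, ω.2.1 u = false ∧ A u v = true ∧ ω.2.2 u v = true),
   p.2.1 ∪ p.1, Sev)

def flee2Proc (A : V → V → Bool) (ω : Coins V) : ℕ → Finset V × Finset V × Finset V
  | 0 => (Finset.univ.filter (fun v => ω.1 v = true), ∅, ∅)
  | t + 1 => flee2Step A ω (flee2Proc A ω t)

def everFlee2 (A : V → V → Bool) (ω : Coins V) : Finset V :=
  (flee2Proc A ω (Fintype.card V)).1 ∪ (flee2Proc A ω (Fintype.card V)).2.1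

/-- The mean final extent of this 2FleeSIR epidemic. -/
noncomputable def flee2MeanExtent (A : V → V → Bool) (σ γ : V → ℝ) (τ : V → V → ℝ) : ℝ :=
  ∑ ω : Coins V, coinWeight σ γ τ ω * ((everFlee2 A ω).card : ℝ)


/-!
Condition on the sure coins: the source `s` is the only initially infected node and nobody is
removed. In round one no susceptible node sees two affected neighbours, so nobody flees, and `s`
infects exactly the nodes `v` whose coin `s → v` shows `true`. From round two on `s` is recovered,
so on the complete graph every susceptible node that an infected node could reach also sees `s`
and that infected node, and flees first: the epidemic stops. Hence the extent is
`1 + #{v ≠ s | coin s → v}`, whose mean under independent `τ`-coins is `1 + τ (n - 1)`.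
-/

section Bernoulli

variable {ι : Type*} [Fintype ι]

def bernoulliWeight (p : ι → ℝ) (c : ι → Bool) : ℝ :=
  ∏ i, if c i then p i else 1 - p i

lemma sum_prod_bool [DecidableEq ι] (f : ι → Bool → ℝ) :
    ∑ c : ι → Bool, ∏ i, f i (c i) = ∏ i, (f i true + f i false) := by
  simp only [← Fintype.prod_sum, Fintype.sum_bool]

lemma sum_bernoulliWeight [DecidableEq ι] (p : ι → ℝ) : ∑ c, bernoulliWeight p c = 1 := by
  simpa [bernoulliWeight] using sum_prod_bool fun i b => if b then p i else 1 - p i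

lemma sum_bernoulliWeight_mul_ite [DecidableEq ι] (p : ι → ℝ) (i : ι) :
    ∑ c, bernoulliWeight p c * (if c i then 1 else 0) = p i := by
  have hind (c : ι → Bool) :
      (if c i then (1 : ℝ) else 0) = ∏ j, if j = i then (if c j then 1 else 0) else 1 := by
    simp
  simp only [bernoulliWeight, hind, ← prod_mul_distrib]
  rw [sum_prod_bool fun j b =>
    (if b then p j else 1 - p j) * if j = i then (if b then 1 else 0) else 1]
  calc _ = ∏ j, if j = i then p i else 1 :=
        prod_congr rfl fun j _ => by by_cases hj : j = i <;> simp [hj]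
    _ = p i := by simp

lemma bernoulliWeight_of_eq_indicator {p : ι → ℝ} (b : ι → Bool)
    (hp : ∀ i, p i = if b i then 1 else 0) (c : ι → Bool) :
    bernoulliWeight p c = if c = b then 1 else 0 := by
  split_ifs with hcb
  · subst hcb
    refine prod_eq_one fun i _ => ?_
    cases hc : c i <;> simp [hp, hc]
  · obtain ⟨i, hi⟩ := Function.ne_iff.mp hcb
    refine prod_eq_zero (mem_univ i) ?_
    cases hc : c i <;> cases hb : b i <;> simp_all

end Bernoulli

lemma coinWeight_eq_mul_bernoulliWeight {W : Type*} [Fintype W] (σ γ : W → ℝ)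
    (τ : W → W → ℝ) (ω : Coins W) :
    coinWeight σ γ τ ω = bernoulliWeight σ ω.1 * bernoulliWeight γ ω.2.1 *
      bernoulliWeight (Function.uncurry τ) (Function.uncurry ω.2.2) := by
  simp only [coinWeight, bernoulliWeight, Fintype.prod_prod_type, Function.uncurry_apply_pair]
  rfl

lemma sum_coinWeight_mul_of_eq_indicator {σ γ : V → ℝ}
    (τ : V → V → ℝ) (a b : V → Bool) (hσ : ∀ v, σ v = if a v then 1 else 0)
    (hγ : ∀ v, γ v = if b v then 1 else 0) (F : Coins V → ℝ) :
    ∑ ω, coinWeight σ γ τ ω * F ω =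
      ∑ d : V × V → Bool, bernoulliWeight (Function.uncurry τ) d * F (a, b, Function.curry d) := by
  simp only [coinWeight_eq_mul_bernoulliWeight, bernoulliWeight_of_eq_indicator a hσ,
    bernoulliWeight_of_eq_indicator b hγ, Fintype.sum_prod_type, ite_mul, one_mul, zero_mul,
    sum_ite_irrel, sum_const_zero, Fintype.sum_ite_eq']
  exact Fintype.sum_equiv (Equiv.curry V V Bool).symm _ _ fun c => rfl

section Flee2

variable (A : V → V → Bool) (ω : Coins V)

lemma flee2Step_singleton_empty (s : V) :
    flee2Step A ω ({s}, ∅, ∅) =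
      (univ.filter fun v => v ≠ s ∧ ω.2.1 s = false ∧ A s v = true ∧ ω.2.2 s v = true,
        {s}, ∅) := by
  have hle (v : V) : (univ.filter fun u => A u v = true ∧ u = s).card ≤ 1 :=
    card_le_one.mpr fun u hu w hw => by simp_all
  simp [flee2Step, hle]

lemma flee2Step_of_fst_eq_empty {p : Finset V × Finset V × Finset V} (h : p.1 = ∅) :
    (flee2Step A ω p).1 = ∅ ∧ (flee2Step A ω p).2.1 = p.2.1 := by
  simp [flee2Step, h]

lemma flee2Proc_add_of_fst_eq_empty {k : ℕ} (h : (flee2Proc A ω k).1 = ∅) (m : ℕ) :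
    (flee2Proc A ω (k + m)).1 = ∅ ∧ (flee2Proc A ω (k + m)).2.1 = (flee2Proc A ω k).2.1 := by
  induction m with
  | zero => exact ⟨h, rfl⟩
  | succ m ih =>
    obtain ⟨hI, hR⟩ := flee2Step_of_fst_eq_empty A ω ih.1
    exact ⟨hI, hR.trans ih.2⟩

end Flee2

lemma flee2Step_complete_fst_eq_empty (ω : Coins V) {p : Finset V × Finset V × Finset V} {r : V}
    (hr : r ∈ p.2.1) (hrI : r ∉ p.1) :
    (flee2Step (fun u v => decide (u ≠ v)) ω p).1 = ∅ := by
  refine eq_empty_of_forall_notMem fun v hv => ?_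
  simp only [flee2Step, mem_filter, mem_univ, true_and, mem_union, not_or, not_and,
    not_le] at hv
  obtain ⟨hvI, hvR, ⟨-, hsev⟩, u, hu, -, -, -⟩ := hv
  have hur : u ≠ r := ne_of_mem_of_not_mem hu hrI
  have huv : u ≠ v := ne_of_mem_of_not_mem hu hvI
  have hrv : r ≠ v := ne_of_mem_of_not_mem hr hvR
  have hpair : {u, r} ⊆ univ.filter fun w => decide (w ≠ v) = true ∧ (w ∈ p.1 ∨ w ∈ p.2.1) := by
    intro w hw
    rcases mem_insert.mp hw with rfl | hw
    · simp [hu, huv]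
    · rw [mem_singleton.mp hw]
      simp [hr, hrv]
  have := card_le_card hpair
  rw [card_pair hur] at this
  exact absurd (hsev hvI hvR) (by omega)

lemma everFlee2_complete_of_single_source (ω : Coins V) (s : V)
    (hω : ∀ v, ω.1 v = decide (v = s)) :
    everFlee2 (fun u v => decide (u ≠ v)) ω =
      insert s (univ.filter fun v => v ≠ s ∧ ω.2.1 s = false ∧ ω.2.2 s v = true) := by
  set K : V → V → Bool := fun u v => decide (u ≠ v)
  set I₁ := univ.filter fun v => v ≠ s ∧ ω.2.1 s = false ∧ ω.2.2 s v = true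
  have hproc1 : flee2Proc K ω 1 = (I₁, {s}, ∅) := by
    have hproc0 : flee2Proc K ω 0 = ({s}, ∅, ∅) := by
      simp [flee2Proc, hω, filter_eq']
    rw [flee2Proc, hproc0, flee2Step_singleton_empty]
    congr 1
    ext v
    simp only [K, I₁, mem_filter, mem_univ, true_and, decide_eq_true_eq]
    grind
  have hproc2 : (flee2Proc K ω 2).1 = ∅ ∧ (flee2Proc K ω 2).2.1 = insert s I₁ := by
    rw [flee2Proc, hproc1]
    exact ⟨flee2Step_complete_fst_eq_empty ω (r := s) (by simp) (by simp [I₁]), insert_eq s I₁⟩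
  unfold everFlee2
  rcases Nat.lt_or_ge (Fintype.card V) 2 with hn | hn
  · have hcard : Fintype.card V = 1 := by
      have := Fintype.card_pos_iff.mpr ⟨s⟩
      omega
    rw [hcard, hproc1, union_comm, insert_eq]
  · obtain ⟨m, hm⟩ := Nat.exists_eq_add_of_le hn
    obtain ⟨hI, hR⟩ := flee2Proc_add_of_fst_eq_empty K ω hproc2.1 m
    rw [hm, hI, hR, hproc2.2, empty_union]

theorem flee_complete_graph_linear_extent_general {V : Type*} [Fintype V] [DecidableEq V]
    (s : V) (t : ℝ) :
    flee2MeanExtent (fun u v => decide (u ≠ v))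
        (fun v => if v = s then 1 else 0) (fun _ => 0) (fun _ _ => t)
      = 1 + t * ((Fintype.card V : ℝ) - 1) := by
  have hextent (d : V × V → Bool) :
      ((everFlee2 (fun u v => decide (u ≠ v))
        (fun v => decide (v = s), fun _ => false, Function.curry d)).card : ℝ) =
        1 + ∑ v ∈ univ.erase s, if d (s, v) then 1 else 0 := by
    rw [everFlee2_complete_of_single_source _ s fun v => rfl, card_insert_of_notMem (by simp),
      sum_boole, filter_erase]
    push_cast
    rw [add_comm]
    congr 3
    ext v
    simp
  unfold flee2MeanExtent
  rw [sum_coinWeight_mul_of_eq_indicator _ (fun v => decide (v = s)) (fun _ => false)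
    (fun v => by simp) (fun v => by simp)]
  simp only [hextent, mul_add, mul_one, mul_sum, sum_add_distrib, sum_bernoulliWeight]
  rw [sum_comm]
  simp only [sum_bernoulliWeight_mul_ite, Function.uncurry_apply_pair, sum_const,
    card_erase_of_mem (mem_univ s), card_univ, nsmul_eq_mul]
  rw [Nat.cast_sub (Fintype.card_pos_iff.mpr ⟨s⟩)]
  push_cast
  ring

/-- **no outbreak transition for 2FleeSIR on the complete graph.**
On the complete graph `K_n` with one initially infected node `s`, removal
probability `0` and uniform transmission probability `t ∈ [0,1]`, the mean final
extent of 2FleeSIR is exactly `1 + t(n-1)` — linear in `t` and `n`, with no jump at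
`t = 1/n`. -/
theorem flee_complete_graph_linear_extent {V : Type*} [Fintype V] [DecidableEq V]
    (s : V) (t : ℝ) (h0 : 0 ≤ t) (h1 : t ≤ 1) :
    flee2MeanExtent (fun u v => decide (u ≠ v))
        (fun v => if v = s then 1 else 0) (fun _ => 0) (fun _ _ => t)
      = 1 + t * ((Fintype.card V : ℝ) - 1) :=
  flee_complete_graph_linear_extent_general s t
end
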